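/- Any polynomial in the single-mode Fibonacci creation and annihilation operators α, α†, β, β† reduces, using the single-mode relations, to a polynomial of degree at most 4: the algebra generated by α and β (concrete 5×5 matrices) is spanned by monomials in α, α†, β, β† of length ≤ 4. -/

import Mathlib

open Matrix

/-- `A = |0⟩⟨1|`. -/
def fibA : Matrix (Fin 5) (Fin 5) ℂ := Matrix.single 0 1 1
/-- `B₁ = |2⟩⟨3|`. -/
def fibB₁ : Matrix (Fin 5) (Fin 5) ℂ := Matrix.single 2 3 1
/-- `B₂ = |4⟩⟨3|`. -/
def fibB₂ : Matrix (Fin 5) (Fin 5) ℂ := Matrix.single 4 3 1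

/-- Single-mode Fibonacci annihilation operator `α = (1/√2)A + B₁`. -/
noncomputable def fibα : Matrix (Fin 5) (Fin 5) ℂ :=
  ((1 / Real.sqrt 2 : ℝ) : ℂ) • fibA + fibB₁
/-- Single-mode Fibonacci annihilation operator `β = (1/√2)A + B₂`. -/
noncomputable def fibβ : Matrix (Fin 5) (Fin 5) ℂ :=
  ((1 / Real.sqrt 2 : ℝ) : ℂ) • fibA + fibB₂

/-!
The annihilators `α, β` are supported on columns `1, 3` and rows `0, 2, 4`, the creators
`α†, β†` the other way round, so a product of two annihilators or of two creators vanishes and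
a nonzero word alternates. A creator times an annihilator lies in `K = span {α†α, α†β}`
(`α†α = ½E₁₁ + E₃₃`, `α†β = β†α = ½E₁₁`), and `K` is closed under multiplication. An
alternating word of length five contains a factor `y x y' x'` with `y, y'` creators, which lies
in `K`, so the word is a combination of words of length three. Hence the span of the words of
length at most four is stable under left multiplication by the generators, and contains `1`.
-/

open Submodule
open scoped Pointwise

section Words

variable {R A : Type*} [CommSemiring R] [Semiring A] [Algebra R A] {s : Set A} {n : ℕ}

def wordProds (s : Set A) (n : ℕ) : Set A :=
  {m | ∃ L : List A, (∀ x ∈ L, x ∈ s) ∧ L.length ≤ n ∧ m = L.prod}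

theorem mul_mem_wordProds_succ {x w : A} (hx : x ∈ s) (hw : w ∈ wordProds s n) :
    x * w ∈ wordProds s (n + 1) := by
  obtain ⟨L, hL, hLn, rfl⟩ := hw
  refine ⟨x :: L, ?_, by simpa using hLn, (List.prod_cons).symm⟩
  simpa [hx] using hL

theorem mul_mem_wordProds_succ' {x w : A} (hw : w ∈ wordProds s n) (hx : x ∈ s) :
    w * x ∈ wordProds s (n + 1) := by
  obtain ⟨L, hL, hLn, rfl⟩ := hw
  refine ⟨L ++ [x], ?_, by simpa using hLn, by simp⟩
  simpa [hx, or_imp, forall_and] using hL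

theorem span_mul_span_wordProds_le :
    span R s * span R (wordProds s n) ≤ span R (wordProds s (n + 1)) := by
  rw [span_mul_span]
  exact span_mono (Set.mul_subset_iff.2 fun _ hx _ hw => mul_mem_wordProds_succ hx hw)

theorem span_wordProds_mul_span_le :
    span R (wordProds s n) * span R s ≤ span R (wordProds s (n + 1)) := by
  rw [span_mul_span]
  exact span_mono (Set.mul_subset_iff.2 fun _ hw _ hx => mul_mem_wordProds_succ' hw hx)

variable (R) in
theorem span_wordProds_succ_le
    (h : ∀ L : List A, (∀ x ∈ L, x ∈ s) → L.length = n + 1 → L.prod ∈ span R (wordProds s n)) :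
    span R (wordProds s (n + 1)) ≤ span R (wordProds s n) := by
  refine span_le.2 ?_
  rintro _ ⟨L, hL, hLn, rfl⟩
  rcases Nat.lt_or_eq_of_le hLn with hlt | heq
  · exact subset_span ⟨L, hL, Nat.le_of_lt_succ hlt, rfl⟩
  · exact h L hL heq

theorem list_prod_mem_span_wordProds
    (h : ∀ L : List A, (∀ x ∈ L, x ∈ s) → L.length = n + 1 → L.prod ∈ span R (wordProds s n))
    {L : List A} (hL : ∀ x ∈ L, x ∈ s) : L.prod ∈ span R (wordProds s n) := by
  induction L with
  | nil => exact subset_span ⟨[], by simp, by simp, rfl⟩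
  | cons x L ih =>
    obtain ⟨hx, hL⟩ := List.forall_mem_cons.1 hL
    rw [List.prod_cons]
    exact span_wordProds_succ_le R h
      (span_mul_span_wordProds_le (mul_mem_mul (subset_span hx) (ih hL)))

theorem adjoin_toSubmodule_eq_span_wordProds
    (h : ∀ L : List A, (∀ x ∈ L, x ∈ s) → L.length = n + 1 → L.prod ∈ span R (wordProds s n)) :
    Subalgebra.toSubmodule (Algebra.adjoin R s) = span R (wordProds s n) := by
  refine le_antisymm ?_ (span_le.2 ?_)
  · rw [Algebra.adjoin_eq_span, span_le]
    intro _ hm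
    obtain ⟨L, hL, rfl⟩ := Submonoid.exists_list_of_mem_closure hm
    exact list_prod_mem_span_wordProds h hL
  · rintro _ ⟨L, hL, -, rfl⟩
    exact Subalgebra.list_prod_mem _ fun x hx => Algebra.subset_adjoin (hL x hx)

end Words

theorem ofReal_inv_sqrt_two_mul_self :
    ((Real.sqrt 2 : ℝ) : ℂ)⁻¹ * ((Real.sqrt 2 : ℝ) : ℂ)⁻¹ = 2⁻¹ := by
  rw [← mul_inv, ← Complex.ofReal_mul, Real.mul_self_sqrt zero_le_two]
  norm_num

theorem conjTranspose_fibα_mul_fibα : fibαᴴ * fibα = single 1 1 2⁻¹ + single 3 3 1 := by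
  simp [fibα, fibA, fibB₁, add_mul, mul_add, ofReal_inv_sqrt_two_mul_self]

theorem conjTranspose_fibα_mul_fibβ : fibαᴴ * fibβ = single 1 1 2⁻¹ := by
  simp [fibα, fibβ, fibA, fibB₁, fibB₂, add_mul, mul_add, ofReal_inv_sqrt_two_mul_self]

theorem conjTranspose_fibβ_mul_fibα : fibβᴴ * fibα = fibαᴴ * fibβ := by
  simp [fibα, fibβ, fibA, fibB₁, fibB₂, add_mul, mul_add]

theorem conjTranspose_fibβ_mul_fibβ : fibβᴴ * fibβ = fibαᴴ * fibα := by
  simp [fibα, fibβ, fibA, fibB₁, fibB₂, add_mul, mul_add]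

abbrev fibGens : Set (Matrix (Fin 5) (Fin 5) ℂ) := {fibα, fibαᴴ, fibβ, fibβᴴ}

def fibAnn : Set (Matrix (Fin 5) (Fin 5) ℂ) := {fibα, fibβ}

def fibCre : Set (Matrix (Fin 5) (Fin 5) ℂ) := {fibαᴴ, fibβᴴ}

theorem mem_fibAnn_or_mem_fibCre {g : Matrix (Fin 5) (Fin 5) ℂ} (hg : g ∈ fibGens) :
    g ∈ fibAnn ∨ g ∈ fibCre := by
  rcases hg with rfl | rfl | rfl | rfl <;> simp [fibAnn, fibCre]

theorem mul_eq_zero_of_mem_fibAnn {x y : Matrix (Fin 5) (Fin 5) ℂ} (hx : x ∈ fibAnn)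
    (hy : y ∈ fibAnn) : x * y = 0 := by
  rcases hx with rfl | rfl <;> rcases hy with rfl | rfl <;>
    simp [fibα, fibβ, fibA, fibB₁, fibB₂, add_mul, mul_add]

theorem mul_eq_zero_of_mem_fibCre {x y : Matrix (Fin 5) (Fin 5) ℂ} (hx : x ∈ fibCre)
    (hy : y ∈ fibCre) : x * y = 0 := by
  rcases hx with rfl | rfl <;> rcases hy with rfl | rfl <;>
    rw [← conjTranspose_mul, mul_eq_zero_of_mem_fibAnn (by simp [fibAnn]) (by simp [fibAnn]),
      conjTranspose_zero]

noncomputable def fibNumberSpan : Submodule ℂ (Matrix (Fin 5) (Fin 5) ℂ) :=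
  span ℂ {fibαᴴ * fibα, fibαᴴ * fibβ}

theorem fibNumberSpan_mul_le : fibNumberSpan * fibNumberSpan ≤ fibNumberSpan := by
  rw [fibNumberSpan, span_mul_span, span_le]
  refine Set.mul_subset_iff.2 fun a ha b hb => ?_
  simp only [Set.mem_insert_iff, Set.mem_singleton_iff] at ha hb
  have hP : fibαᴴ * fibα ∈ fibNumberSpan := subset_span (by simp)
  have hQ : fibαᴴ * fibβ ∈ fibNumberSpan := subset_span (by simp)
  have hPQ : (fibαᴴ * fibα) * (fibαᴴ * fibβ) = (2⁻¹ : ℂ) • (fibαᴴ * fibβ) := by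
    simp [conjTranspose_fibα_mul_fibα, conjTranspose_fibα_mul_fibβ, add_mul]
  have hQP : (fibαᴴ * fibβ) * (fibαᴴ * fibα) = (2⁻¹ : ℂ) • (fibαᴴ * fibβ) := by
    simp [conjTranspose_fibα_mul_fibα, conjTranspose_fibα_mul_fibβ, mul_add]
  have hQQ : (fibαᴴ * fibβ) * (fibαᴴ * fibβ) = (2⁻¹ : ℂ) • (fibαᴴ * fibβ) := by
    simp [conjTranspose_fibα_mul_fibβ]
  have hPP : (fibαᴴ * fibα) * (fibαᴴ * fibα) = fibαᴴ * fibα - (2⁻¹ : ℂ) • (fibαᴴ * fibβ) := by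
    rw [eq_sub_iff_add_eq]
    simp only [conjTranspose_fibα_mul_fibα, conjTranspose_fibα_mul_fibβ, mul_add, add_mul,
      single_mul_single_same, single_mul_single_of_ne, ne_eq, Fin.reduceEq, not_false_eq_true,
      add_zero, zero_add, mul_one, smul_single, smul_eq_mul]
    rw [add_right_comm, ← single_add]
    norm_num
  rcases ha with rfl | rfl <;> rcases hb with rfl | rfl
  · rw [hPP]
    exact sub_mem hP (smul_mem _ _ hQ)
  · rw [hPQ]; exact smul_mem _ _ hQ
  · rw [hQP]; exact smul_mem _ _ hQ
  · rw [hQQ]; exact smul_mem _ _ hQ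

theorem mul_mem_fibNumberSpan {y x : Matrix (Fin 5) (Fin 5) ℂ} (hy : y ∈ fibCre)
    (hx : x ∈ fibAnn) : y * x ∈ fibNumberSpan := by
  have hP : fibαᴴ * fibα ∈ fibNumberSpan := subset_span (by simp)
  have hQ : fibαᴴ * fibβ ∈ fibNumberSpan := subset_span (by simp)
  rcases hy with rfl | rfl <;> rcases hx with rfl | rfl
  · exact hP
  · exact hQ
  · rwa [conjTranspose_fibβ_mul_fibα]
  · rwa [conjTranspose_fibβ_mul_fibβ]

theorem fibNumberSpan_le_span_wordProds : fibNumberSpan ≤ span ℂ (wordProds fibGens 3) := by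
  refine span_le.2 ?_
  rintro _ (rfl | rfl)
  · exact subset_span ⟨[fibαᴴ, fibα], by simp, by simp, by simp⟩
  · exact subset_span ⟨[fibαᴴ, fibβ], by simp, by simp, by simp⟩

theorem mul_mul_mem_fibNumberSpan {y₁ x₁ y₂ x₂ : Matrix (Fin 5) (Fin 5) ℂ}
    (hy₁ : y₁ ∈ fibCre) (hx₁ : x₁ ∈ fibAnn) (hy₂ : y₂ ∈ fibCre) (hx₂ : x₂ ∈ fibAnn) :
    y₁ * x₁ * (y₂ * x₂) ∈ fibNumberSpan :=
  fibNumberSpan_mul_le <|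
    mul_mem_mul (mul_mem_fibNumberSpan hy₁ hx₁) (mul_mem_fibNumberSpan hy₂ hx₂)

theorem list_prod_mem_span_wordProds_fibGens {L : List (Matrix (Fin 5) (Fin 5) ℂ)}
    (hL : ∀ x ∈ L, x ∈ fibGens) (hlen : L.length = 5) :
    L.prod ∈ span ℂ (wordProds fibGens 4) := by
  match L, hlen with
  | [g₁, g₂, g₃, g₄, g₅], _ =>
    simp only [List.forall_mem_cons, List.not_mem_nil, IsEmpty.forall_iff, implies_true,
      and_true] at hL
    obtain ⟨h₁, h₂, h₃, h₄, h₅⟩ := hL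
    have hprod : [g₁, g₂, g₃, g₄, g₅].prod = g₁ * g₂ * g₃ * g₄ * g₅ := by simp [mul_assoc]
    have hleft : ∀ k ∈ fibNumberSpan, g₁ * k ∈ span ℂ (wordProds fibGens 4) := fun _ hk ↦
      span_mul_span_wordProds_le (mul_mem_mul (subset_span h₁) (fibNumberSpan_le_span_wordProds hk))
    have hright : ∀ k ∈ fibNumberSpan, k * g₅ ∈ span ℂ (wordProds fibGens 4) := fun _ hk ↦
      span_wordProds_mul_span_le (mul_mem_mul (fibNumberSpan_le_span_wordProds hk) (subset_span h₅))
    rw [hprod]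
    rcases mem_fibAnn_or_mem_fibCre h₃ with h₃ | h₃
    · rcases mem_fibAnn_or_mem_fibCre h₂ with h₂ | h₂
      · rw [mul_assoc g₁, mul_eq_zero_of_mem_fibAnn h₂ h₃]; simp
      rcases mem_fibAnn_or_mem_fibCre h₄ with h₄ | h₄
      · rw [mul_assoc (g₁ * g₂), mul_eq_zero_of_mem_fibAnn h₃ h₄]; simp
      rcases mem_fibAnn_or_mem_fibCre h₅ with h₅ | h₅
      · rw [show g₁ * g₂ * g₃ * g₄ * g₅ = g₁ * (g₂ * g₃ * (g₄ * g₅)) by simp only [mul_assoc]]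
        exact hleft _ (mul_mul_mem_fibNumberSpan h₂ h₃ h₄ h₅)
      · rw [mul_assoc (g₁ * g₂ * g₃), mul_eq_zero_of_mem_fibCre h₄ h₅]; simp
    · rcases mem_fibAnn_or_mem_fibCre h₂ with h₂ | h₂
      swap
      · rw [mul_assoc g₁, mul_eq_zero_of_mem_fibCre h₂ h₃]; simp
      rcases mem_fibAnn_or_mem_fibCre h₄ with h₄ | h₄
      swap
      · rw [mul_assoc (g₁ * g₂), mul_eq_zero_of_mem_fibCre h₃ h₄]; simp
      rcases mem_fibAnn_or_mem_fibCre h₁ with h₁ | h₁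
      · rw [mul_eq_zero_of_mem_fibAnn h₁ h₂]; simp
      · rw [show g₁ * g₂ * g₃ * g₄ * g₅ = g₁ * g₂ * (g₃ * g₄) * g₅ by simp only [mul_assoc]]
        exact hright _ (mul_mul_mem_fibNumberSpan h₁ h₂ h₃ h₄)

/-- The algebra generated by the single-mode Fibonacci creation and annihilation
operators is spanned by monomials in `α, α†, β, β†` of length at most 4. -/
theorem fib_single_mode_degree_four :
    (Algebra.adjoin ℂ ({fibα, fibαᴴ, fibβ, fibβᴴ} :
        Set (Matrix (Fin 5) (Fin 5) ℂ))).toSubmodule =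
      Submodule.span ℂ
        {m : Matrix (Fin 5) (Fin 5) ℂ |
          ∃ L : List (Matrix (Fin 5) (Fin 5) ℂ),
            (∀ x ∈ L, x ∈ ({fibα, fibαᴴ, fibβ, fibβᴴ} :
              Set (Matrix (Fin 5) (Fin 5) ℂ))) ∧
            L.length ≤ 4 ∧ m = L.prod} :=
  adjoin_toSubmodule_eq_span_wordProds fun _ ↦ list_prod_mem_span_wordProds_fibGens
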